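/- arXiv:2512.02788 — 2 statements merged into one kernel-verified Lean document; each statement's English description precedes it below -/
import Mathlib

section
/- Define f(I) = Π - (μ+γ+d)(μ+η+σβI)I/(μ+η+σβI+σι) - (μ+ι)(μ+γ+d)(μ+η+σβI)/(β(μ+η+σβI+σι)) + ιη(μ+γ+d)/(β(μ+η+σβI+σι)) + J·I for I ≥ 0, where all parameters Π, β, μ, ι, η, γ, d are positive, σ ∈ (0,1], and 0 ≤ J < μ+γ+d. If R₀ = Πβ(μ+η+σι)/(μ(μ+ι+η)(μ+γ+d)) > 1, then f(0) > 0, f(I) → -∞ as I → ∞, and f is continuous on [0,∞); hence f has a positive root I* > 0. -/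
/-! Writing `D = μ + η + σβI + σι` and `c = μ + γ + d`, the identity
`c (μ + η + σβI) I / D = c I - c σι I / D` collapses `f` to
`Pi - (c - J) I - c μ (μ + ι + η + σβI) / (β D)`, and `D > 0` for `I ≥ 0`.
At `I = 0` positivity of this expression is exactly `R₀ > 1`; for `I ≥ 0` it lies below the line
`Pi - (c - J) I`, which tends to `-∞` because `J < c`; the intermediate value theorem on
`[0, ∞)` then gives the positive root. -/

open Filter Set

theorem tendsto_atBot_of_eventually_le_const_sub_mul {𝕜 : Type*} [Field 𝕜] [LinearOrder 𝕜]
    [IsStrictOrderedRing 𝕜] {f : 𝕜 → 𝕜} {C k : 𝕜} (hk : 0 < k)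
    (hf : ∀ᶠ x in atTop, f x ≤ C - k * x) : Tendsto f atTop atBot := by
  refine tendsto_atBot_mono' atTop hf ?_
  simpa only [sub_eq_add_neg, neg_mul, id] using
    tendsto_atBot_add_const_left atTop C (tendsto_id.const_mul_atTop_of_neg (neg_neg_of_pos hk))

theorem endemic_residual_eq (Pi β μ ι η σ c J I : ℝ) (hβ : β ≠ 0)
    (hD : μ + η + σ * β * I + σ * ι ≠ 0) :
    Pi - c * (μ + η + σ * β * I) * I / (μ + η + σ * β * I + σ * ι)
        - (μ + ι) * c * (μ + η + σ * β * I) / (β * (μ + η + σ * β * I + σ * ι))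
        + ι * η * c / (β * (μ + η + σ * β * I + σ * ι)) + J * I
      = Pi - (c - J) * I - c * μ * (μ + ι + η + σ * β * I) / (β * (μ + η + σ * β * I + σ * ι)) := by
  field_simp
  ring

theorem endemic_equilibrium_exists_general (Pi β μ ι η γ d σ J : ℝ)
    (hβ : 0 < β) (hμ : 0 < μ) (hι : 0 < ι) (hη : 0 < η)
    (hγ : 0 < γ) (hd : 0 < d) (hσ : σ ∈ Set.Ioc (0:ℝ) 1)
    (hJ : J < μ + γ + d)
    (f : ℝ → ℝ)
    (hf : ∀ I, f I = Pi - (μ + γ + d) * (μ + η + σ * β * I) * I / (μ + η + σ * β * I + σ * ι)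
        - (μ + ι) * (μ + γ + d) * (μ + η + σ * β * I) / (β * (μ + η + σ * β * I + σ * ι))
        + ι * η * (μ + γ + d) / (β * (μ + η + σ * β * I + σ * ι)) + J * I)
    (hR0 : Pi * β * (μ + η + σ * ι) / (μ * (μ + ι + η) * (μ + γ + d)) > 1) :
    f 0 > 0 ∧ Tendsto f atTop atBot ∧ ContinuousOn f (Set.Ici 0) ∧
      ∃ I : ℝ, 0 < I ∧ f I = 0 := by
  obtain ⟨hσ, -⟩ := hσ
  set c := μ + γ + d
  have hD : ∀ I ∈ Ici (0 : ℝ), 0 < μ + η + σ * β * I + σ * ι := fun I (hI : 0 ≤ I) => by positivity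
  have hred : EqOn f (fun I => Pi - (c - J) * I
      - c * μ * (μ + ι + η + σ * β * I) / (β * (μ + η + σ * β * I + σ * ι))) (Ici 0) :=
    fun I hI => (hf I).trans (endemic_residual_eq Pi β μ ι η σ c J I hβ.ne' (hD I hI).ne')
  have hf0 : 0 < f 0 := by
    have hR0' := (one_lt_div (by positivity)).mp hR0
    rw [hred self_mem_Ici, sub_pos, div_lt_iff₀ (by positivity)]
    linarith
  have htend : Tendsto f atTop atBot := by
    refine tendsto_atBot_of_eventually_le_const_sub_mul (C := Pi) (sub_pos.2 hJ) ?_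
    filter_upwards [eventually_ge_atTop 0] with I hI
    rw [hred hI, sub_le_self_iff]
    exact div_nonneg (by positivity) (mul_pos hβ (hD I hI)).le
  have hcont : ContinuousOn f (Ici 0) :=
    ContinuousOn.congr (by fun_prop (disch := exact fun I hI => (mul_pos hβ (hD I hI)).ne')) hred
  obtain ⟨I, hI, hfI⟩ := intermediate_value_Ioi' hcont htend hf0
  exact ⟨hf0, htend, hcont, I, hI, hfI⟩

theorem endemic_equilibrium_exists (Pi β μ ι η γ d σ J : ℝ)
    (hPi : 0 < Pi) (hβ : 0 < β) (hμ : 0 < μ) (hι : 0 < ι) (hη : 0 < η)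
    (hγ : 0 < γ) (hd : 0 < d) (hσ : σ ∈ Set.Ioc (0:ℝ) 1)
    (hJ0 : 0 ≤ J) (hJ : J < μ + γ + d)
    (f : ℝ → ℝ)
    (hf : ∀ I, f I = Pi - (μ + γ + d) * (μ + η + σ * β * I) * I / (μ + η + σ * β * I + σ * ι)
        - (μ + ι) * (μ + γ + d) * (μ + η + σ * β * I) / (β * (μ + η + σ * β * I + σ * ι))
        + ι * η * (μ + γ + d) / (β * (μ + η + σ * β * I + σ * ι)) + J * I)
    (hR0 : Pi * β * (μ + η + σ * ι) / (μ * (μ + ι + η) * (μ + γ + d)) > 1) :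
    f 0 > 0 ∧ Tendsto f atTop atBot ∧ ContinuousOn f (Set.Ici 0) ∧
      ∃ I : ℝ, 0 < I ∧ f I = 0 :=
  endemic_equilibrium_exists_general Pi β μ ι η γ d σ J hβ hμ hι hη hγ hd hσ hJ f hf hR0
end

section
/- f(0) = Π(1 - 1/R₀), where f is as above and R₀ = Πβ(μ+η+σι)/(μ(μ+ι+η)(μ+γ+d)). In particular f(0) > 0 iff R₀ > 1. -/
theorem f_zero_value (Pi β μ ι η γ d σ J : ℝ)
    (hPi : 0 < Pi) (hβ : 0 < β) (hμ : 0 < μ) (hι : 0 < ι) (hη : 0 < η)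
    (hγ : 0 < γ) (hd : 0 < d) (hσ : σ ∈ Set.Ioc (0:ℝ) 1) (hJ0 : 0 ≤ J)
    (f : ℝ → ℝ)
    (hf : ∀ I, f I = Pi - (μ + γ + d) * (μ + η + σ * β * I) * I / (μ + η + σ * β * I + σ * ι)
        - (μ + ι) * (μ + γ + d) * (μ + η + σ * β * I) / (β * (μ + η + σ * β * I + σ * ι))
        + ι * η * (μ + γ + d) / (β * (μ + η + σ * β * I + σ * ι)) + J * I) :
    f 0 = Pi * (1 - 1 / (Pi * β * (μ + η + σ * ι) / (μ * (μ + ι + η) * (μ + γ + d)))) ∧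
    (f 0 > 0 ↔ Pi * β * (μ + η + σ * ι) / (μ * (μ + ι + η) * (μ + γ + d)) > 1) := by
  obtain ⟨hσ0, _⟩ := hσ
  have hden : (0:ℝ) < μ + η + σ * ι := by positivity
  have hβden : (0:ℝ) < β * (μ + η + σ * ι) := by positivity
  have hnum : (0:ℝ) < μ * (μ + ι + η) * (μ + γ + d) := by positivity
  have h0 : f 0 = Pi - μ * (μ + ι + η) * (μ + γ + d) / (β * (μ + η + σ * ι)) := by
    rw [hf]; field_simp; ring
  refine ⟨?_, ?_⟩
  · rw [h0]; field_simp
  · rw [h0, gt_iff_lt, sub_pos, div_lt_iff₀ hβden, gt_iff_lt, lt_div_iff₀ hnum, one_mul]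
    constructor <;> intro h <;> nlinarith [h]
end
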